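/- arXiv:2603.28216 — 10 statements merged into one kernel-verified Lean document; each statement's English description precedes it below -/
import Mathlib

section
/- Let c and k be positive integers with 1 ≤ c ≤ k such that c and k have different parities (c ≢ k (mod 2)). Then the two-color off-diagonal Rado number of the pair of equations x+y+c=z (red) and x+y+k=z (blue) is infinite; that is, for every positive integer N there exists a red–blue coloring of {1, 2, …, N} admitting no red solution (x, y, z) of x+y+c=z with x, y, z all red and no blue solution (x, y, z) of x+y+k=z with x, y, z all blue. -/
/-- If `c` and `k` have different parities, the off-diagonal Rado number of
`x+y+c=z` (red) and `x+y+k=z` (blue) is infinite: for every positive `N` there is a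
red–blue coloring of `{1,…,N}` with no red solution to the first equation and no blue
solution to the second. -/
theorem stmt_0 (c k : ℕ) (hc : 1 ≤ c) (hck : c ≤ k) (hpar : ¬ c ≡ k [MOD 2]) :
    ∀ N : ℕ, 0 < N → ∃ col : ℕ → Bool,
      (¬ ∃ x y z : ℕ, 1 ≤ x ∧ x ≤ N ∧ 1 ≤ y ∧ y ≤ N ∧ 1 ≤ z ∧ z ≤ N ∧
        col x = true ∧ col y = true ∧ col z = true ∧ x + y + c = z) ∧
      (¬ ∃ x y z : ℕ, 1 ≤ x ∧ x ≤ N ∧ 1 ≤ y ∧ y ≤ N ∧ 1 ≤ z ∧ z ≤ N ∧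
        col x = false ∧ col y = false ∧ col z = false ∧ x + y + k = z) := by
  intro N _
  refine ⟨fun n => decide (n % 2 ≠ c % 2), ?_, ?_⟩
  · rintro ⟨x, y, z, _, _, _, _, _, _, hx, hy, hz, heq⟩
    simp only [decide_eq_true_eq] at hx hy hz
    omega
  · rintro ⟨x, y, z, _, _, _, _, _, _, hx, hy, hz, heq⟩
    simp only [decide_eq_false_iff_not, not_not] at hx hy hz
    have h2 : ¬ c % 2 = k % 2 := hpar
    omega
end

section
/- Let c and k be positive integers with 1 ≤ c ≤ k, c ≡ k (mod 2), and k > 2c. Then the two-color off-diagonal Rado number of the pair x+y+c=z (red) and x+y+k=z (blue) equals 2k+c+4; that is, every red–blue coloring of {1, 2, …, 2k+c+4} contains a red solution of x+y+c=z or a blue solution of x+y+k=z, and there exists a red–blue coloring of {1, 2, …, 2k+c+3} containing neither. -/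
/-- For `1 ≤ c ≤ k`, `c ≡ k (mod 2)`, `k > 2c`, the off-diagonal Rado number for
`x+y+c=z` (red) and `x+y+k=z` (blue) equals `2k+c+4`: every red–blue coloring of
`{1,…,2k+c+4}` contains a red solution of the first or a blue solution of the second,
and some coloring of `{1,…,2k+c+3}` contains neither. -/
theorem stmt_2 (c k : ℕ) (hc : 1 ≤ c) (hck : c ≤ k) (hpar : c ≡ k [MOD 2])
    (hk2c : 2 * c < k) :
    (∀ col : ℕ → Bool,
      (∃ x y z : ℕ, 1 ≤ x ∧ x ≤ 2 * k + c + 4 ∧ 1 ≤ y ∧ y ≤ 2 * k + c + 4 ∧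
        1 ≤ z ∧ z ≤ 2 * k + c + 4 ∧
        col x = true ∧ col y = true ∧ col z = true ∧ x + y + c = z) ∨
      (∃ x y z : ℕ, 1 ≤ x ∧ x ≤ 2 * k + c + 4 ∧ 1 ≤ y ∧ y ≤ 2 * k + c + 4 ∧
        1 ≤ z ∧ z ≤ 2 * k + c + 4 ∧
        col x = false ∧ col y = false ∧ col z = false ∧ x + y + k = z)) ∧
    (∃ col : ℕ → Bool,
      (¬ ∃ x y z : ℕ, 1 ≤ x ∧ x ≤ 2 * k + c + 3 ∧ 1 ≤ y ∧ y ≤ 2 * k + c + 3 ∧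
        1 ≤ z ∧ z ≤ 2 * k + c + 3 ∧
        col x = true ∧ col y = true ∧ col z = true ∧ x + y + c = z) ∧
      (¬ ∃ x y z : ℕ, 1 ≤ x ∧ x ≤ 2 * k + c + 3 ∧ 1 ≤ y ∧ y ≤ 2 * k + c + 3 ∧
        1 ≤ z ∧ z ≤ 2 * k + c + 3 ∧
        col x = false ∧ col y = false ∧ col z = false ∧ x + y + k = z)) := by
  have hpar' : c % 2 = k % 2 := hpar
  obtain ⟨d, hd⟩ : ∃ d, k = c + 2 * d := ⟨(k - c) / 2, by omega⟩
  constructor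
  · intro col
    by_contra hcon
    push_neg at hcon
    obtain ⟨hA, hB⟩ := hcon
    -- helper: two reds force blue sum
    have hRed : ∀ x y z : ℕ, 1 ≤ x → x ≤ 2 * k + c + 4 → 1 ≤ y → y ≤ 2 * k + c + 4 →
        z ≤ 2 * k + c + 4 → x + y + c = z → col x = true → col y = true →
        col z = false := by
      intro x y z hx hx' hy hy' hz' hzeq cx cy
      cases hcz : col z
      · rfl
      · exact absurd hzeq (hA x y z hx hx' hy hy' (by omega) hz' cx cy hcz)
    have hBlue : ∀ x y z : ℕ, 1 ≤ x → x ≤ 2 * k + c + 4 → 1 ≤ y → y ≤ 2 * k + c + 4 →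
        z ≤ 2 * k + c + 4 → x + y + k = z → col x = false → col y = false →
        col z = true := by
      intro x y z hx hx' hy hy' hz' hzeq cx cy
      cases hcz : col z
      · exact absurd hzeq (hB x y z hx hx' hy hy' (by omega) hz' cx cy hcz)
      · rfl
    cases h1 : col 1
    · -- Case A: 1 is blue
      have a1 : col (k + 2) = true :=
        hBlue 1 1 (k + 2) (by omega) (by omega) (by omega) (by omega) (by omega)
          (by omega) h1 h1
      have a2 : col (2 * k + c + 4) = false :=
        hRed (k + 2) (k + 2) (2 * k + c + 4) (by omega) (by omega) (by omega) (by omega)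
          (by omega) (by omega) a1 a1
      have a3 : col (k + c + 3) = true := by
        cases h : col (k + c + 3)
        · have := hBlue 1 (k + c + 3) (2 * k + c + 4) (by omega) (by omega) (by omega)
            (by omega) (by omega) (by omega) h1 h
          simp [this] at a2
        · rfl
      have a4 : col (c + d + 2) = true := by
        cases h : col (c + d + 2)
        · have := hBlue (c + d + 2) (c + d + 2) (2 * k + c + 4) (by omega) (by omega)
            (by omega) (by omega) (by omega) (by omega) h h
          simp [this] at a2
        · rfl
      have a5 : col (k + 2 * c + 4) = false :=
        hRed (c + d + 2) (c + d + 2) (k + 2 * c + 4) (by omega) (by omega) (by omega)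
          (by omega) (by omega) (by omega) a4 a4
      cases h6 : col (c + 2)
      · have := hBlue (c + 2) (c + 2) (k + 2 * c + 4) (by omega) (by omega) (by omega)
          (by omega) (by omega) (by omega) h6 h6
        simp [this] at a5
      · have a7 : col (3 * c + 4) = false :=
          hRed (c + 2) (c + 2) (3 * c + 4) (by omega) (by omega) (by omega) (by omega)
            (by omega) (by omega) h6 h6
        have a8 : col (k + 3 * c + 5) = true :=
          hBlue 1 (3 * c + 4) (k + 3 * c + 5) (by omega) (by omega) (by omega) (by omega)
            (by omega) (by omega) h1 a7
        have a9 : col (k + 3 * c + 5) = false :=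
          hRed (c + 2) (k + c + 3) (k + 3 * c + 5) (by omega) (by omega) (by omega)
            (by omega) (by omega) (by omega) h6 a3
        simp [a9] at a8
    · -- Case B: 1 is red
      have b1 : col (c + 2) = false :=
        hRed 1 1 (c + 2) (by omega) (by omega) (by omega) (by omega) (by omega)
          (by omega) h1 h1
      have b2 : col (k + 2 * c + 4) = true :=
        hBlue (c + 2) (c + 2) (k + 2 * c + 4) (by omega) (by omega) (by omega) (by omega)
          (by omega) (by omega) b1 b1
      have b3 : col (c + d + 2) = false := by
        cases h : col (c + d + 2)
        · rfl
        · have := hRed (c + d + 2) (c + d + 2) (k + 2 * c + 4) (by omega) (by omega)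
            (by omega) (by omega) (by omega) (by omega) h h
          simp [this] at b2
      have b4 : col (2 * k + c + 4) = true :=
        hBlue (c + d + 2) (c + d + 2) (2 * k + c + 4) (by omega) (by omega) (by omega)
          (by omega) (by omega) (by omega) b3 b3
      have b5 : col (2 * k + 3) = false := by
        cases h : col (2 * k + 3)
        · rfl
        · have := hRed 1 (2 * k + 3) (2 * k + c + 4) (by omega) (by omega) (by omega)
            (by omega) (by omega) (by omega) h1 h
          simp [this] at b4
      have b6 : col (2 * d + 1) = true := by
        cases h : col (2 * d + 1)
        · have := hBlue (c + 2) (2 * d + 1) (2 * k + 3) (by omega) (by omega) (by omega)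
            (by omega) (by omega) (by omega) b1 h
          simp [this] at b5
        · rfl
      have b7 : col (k + 3 * c + 5) = false :=
        hRed 1 (k + 2 * c + 4) (k + 3 * c + 5) (by omega) (by omega) (by omega) (by omega)
          (by omega) (by omega) h1 b2
      have b8 : col (2 * c + 3) = true := by
        cases h : col (2 * c + 3)
        · have := hBlue (c + 2) (2 * c + 3) (k + 3 * c + 5) (by omega) (by omega)
            (by omega) (by omega) (by omega) (by omega) b1 h
          simp [this] at b7
        · rfl
      have b9 : col (k + 2 * c + 4) = false :=
        hRed (2 * c + 3) (2 * d + 1) (k + 2 * c + 4) (by omega) (by omega) (by omega)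
          (by omega) (by omega) (by omega) b8 b6
      simp [b9] at b2
  · -- lower bound: blue on [1, k+1], red on [k+2, 2k+c+3]
    refine ⟨fun n => decide (k + 2 ≤ n), ?_, ?_⟩
    · rintro ⟨x, y, z, hx, hx', hy, hy', hz, hz', cx, cy, cz, he⟩
      simp only [decide_eq_true_eq] at cx cy cz
      omega
    · rintro ⟨x, y, z, hx, hx', hy, hy', hz, hz', cx, cy, cz, he⟩
      simp only [decide_eq_false_iff_not, not_le] at cx cy cz
      omega
end

section
/- Let c and k be positive integers with 1 ≤ c ≤ k and k ≤ 2c. Consider the red–blue coloring of {1, 2, …, k+3c+4} in which the red elements are exactly those in {1, …, c+1} ∪ {k+2c+4, …, k+3c+4} and the blue elements are exactly those in {c+2, …, k+2c+3}. Then there is no triple (x, y, z) of red integers in {1, …, k+3c+4} with x+y+c=z and no triple (x, y, z) of blue integers in {1, …, k+3c+4} with x+y+k=z. -/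
/-- For `1 ≤ c ≤ k ≤ 2c`, the coloring of `{1,…,k+3c+4}` with red set
`{1,…,c+1} ∪ {k+2c+4,…,k+3c+4}` and blue set `{c+2,…,k+2c+3}` admits no red triple
solving `x+y+c=z` and no blue triple solving `x+y+k=z`. -/
theorem stmt_3 (c k : ℕ) (hc : 1 ≤ c) (hck : c ≤ k) (hk2c : k ≤ 2 * c) :
    (¬ ∃ x y z : ℕ, 1 ≤ x ∧ x ≤ k + 3 * c + 4 ∧ 1 ≤ y ∧ y ≤ k + 3 * c + 4 ∧
      1 ≤ z ∧ z ≤ k + 3 * c + 4 ∧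
      (x ≤ c + 1 ∨ k + 2 * c + 4 ≤ x) ∧
      (y ≤ c + 1 ∨ k + 2 * c + 4 ≤ y) ∧
      (z ≤ c + 1 ∨ k + 2 * c + 4 ≤ z) ∧
      x + y + c = z) ∧
    (¬ ∃ x y z : ℕ, 1 ≤ x ∧ x ≤ k + 3 * c + 4 ∧ 1 ≤ y ∧ y ≤ k + 3 * c + 4 ∧
      1 ≤ z ∧ z ≤ k + 3 * c + 4 ∧
      (c + 2 ≤ x ∧ x ≤ k + 2 * c + 3) ∧
      (c + 2 ≤ y ∧ y ≤ k + 2 * c + 3) ∧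
      (c + 2 ≤ z ∧ z ≤ k + 2 * c + 3) ∧
      x + y + k = z) := by
  constructor
  · rintro ⟨x, y, z, h⟩; omega
  · rintro ⟨x, y, z, h⟩; omega
end

section
/- Let c and k be positive integers with 1 ≤ c ≤ k, c ≡ k (mod 2), and k ≤ 2c. Then every red–blue coloring of {1, 2, …, k+3c+5} contains either a triple (x, y, z) of red integers with x+y+c=z or a triple (x, y, z) of blue integers with x+y+k=z. -/
/-- For `1 ≤ c ≤ k`, `c ≡ k (mod 2)`, `k ≤ 2c`: every red–blue coloring of
`{1,…,k+3c+5}` contains a red triple solving `x+y+c=z` or a blue triple solving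
`x+y+k=z`. -/
theorem stmt_4 (c k : ℕ) (hc : 1 ≤ c) (hck : c ≤ k) (hpar : c ≡ k [MOD 2])
    (hk2c : k ≤ 2 * c) :
    ∀ col : ℕ → Bool,
      (∃ x y z : ℕ, 1 ≤ x ∧ x ≤ k + 3 * c + 5 ∧ 1 ≤ y ∧ y ≤ k + 3 * c + 5 ∧
        1 ≤ z ∧ z ≤ k + 3 * c + 5 ∧
        col x = true ∧ col y = true ∧ col z = true ∧ x + y + c = z) ∨
      (∃ x y z : ℕ, 1 ≤ x ∧ x ≤ k + 3 * c + 5 ∧ 1 ≤ y ∧ y ≤ k + 3 * c + 5 ∧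
        1 ≤ z ∧ z ≤ k + 3 * c + 5 ∧
        col x = false ∧ col y = false ∧ col z = false ∧ x + y + k = z) := by
  intro col
  by_contra H
  push_neg at H
  obtain ⟨hR, hB⟩ := H
  have hp : c % 2 = k % 2 := hpar
  obtain ⟨m, hm⟩ : ∃ m, c + k = 2 * m := ⟨(c + k) / 2, by omega⟩
  -- helper: no red triple for x+y+c=z
  have red : ∀ x y z : ℕ, 1 ≤ x → 1 ≤ y → z ≤ k + 3 * c + 5 → x + y + c = z →
      col x = true → col y = true → col z = true → False := by
    intro x y z hx hy hz hs cx cy cz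
    exact hR x y z hx (by omega) hy (by omega) (by omega) hz cx cy cz hs
  -- helper: no blue triple for x+y+k=z
  have blue : ∀ x y z : ℕ, 1 ≤ x → 1 ≤ y → z ≤ k + 3 * c + 5 → x + y + k = z →
      col x = false → col y = false → col z = false → False := by
    intro x y z hx hy hz hs cx cy cz
    exact hB x y z hx (by omega) hy (by omega) (by omega) hz cx cy cz hs
  cases h1 : col 1 with
  | false =>
    -- 1 is blue
    have h2 : col (k + 2) = true := by
      cases h2 : col (k + 2) with
      | true => rfl
      | false => exact (blue 1 1 (k + 2) (by omega) (by omega) (by omega) (by omega)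
          h1 h1 h2).elim
    have hQ : col (2 * k + c + 4) = false := by
      cases hQ : col (2 * k + c + 4) with
      | false => rfl
      | true => exact (red (k + 2) (k + 2) (2 * k + c + 4) (by omega) (by omega) (by omega)
          (by omega) h2 h2 hQ).elim
    have hm2 : col (m + 2) = true := by
      cases hm2 : col (m + 2) with
      | true => rfl
      | false => exact (blue (m + 2) (m + 2) (2 * k + c + 4) (by omega) (by omega) (by omega)
          (by omega) hm2 hm2 hQ).elim
    have hP : col (2 * c + k + 4) = false := by
      cases hP : col (2 * c + k + 4) with
      | false => rfl
      | true => exact (red (m + 2) (m + 2) (2 * c + k + 4) (by omega) (by omega) (by omega)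
          (by omega) hm2 hm2 hP).elim
    have h2c3 : col (2 * c + 3) = true := by
      cases h2c3 : col (2 * c + 3) with
      | true => rfl
      | false => exact (blue 1 (2 * c + 3) (2 * c + k + 4) (by omega) (by omega) (by omega)
          (by omega) h1 h2c3 hP).elim
    have hN : col (k + 3 * c + 5) = false := by
      cases hN : col (k + 3 * c + 5) with
      | false => rfl
      | true => exact (red (k + 2) (2 * c + 3) (k + 3 * c + 5) (by omega) (by omega) (by omega)
          (by omega) h2 h2c3 hN).elim
    have h3c4 : col (3 * c + 4) = true := by
      cases h3c4 : col (3 * c + 4) with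
      | true => rfl
      | false => exact (blue 1 (3 * c + 4) (k + 3 * c + 5) (by omega) (by omega) (by omega)
          (by omega) h1 h3c4 hN).elim
    have hc2 : col (c + 2) = false := by
      cases hc2 : col (c + 2) with
      | false => rfl
      | true => exact (red (c + 2) (c + 2) (3 * c + 4) (by omega) (by omega) (by omega)
          (by omega) hc2 hc2 h3c4).elim
    exact blue (c + 2) (c + 2) (2 * c + k + 4) (by omega) (by omega) (by omega)
      (by omega) hc2 hc2 hP
  | true =>
    -- 1 is red
    have hc2 : col (c + 2) = false := by
      cases hc2 : col (c + 2) with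
      | false => rfl
      | true => exact (red 1 1 (c + 2) (by omega) (by omega) (by omega) (by omega)
          h1 h1 hc2).elim
    have hP : col (2 * c + k + 4) = true := by
      cases hP : col (2 * c + k + 4) with
      | true => rfl
      | false => exact (blue (c + 2) (c + 2) (2 * c + k + 4) (by omega) (by omega) (by omega)
          (by omega) hc2 hc2 hP).elim
    have hkc3 : col (k + c + 3) = false := by
      cases hkc3 : col (k + c + 3) with
      | false => rfl
      | true => exact (red 1 (k + c + 3) (2 * c + k + 4) (by omega) (by omega) (by omega)
          (by omega) h1 hkc3 hP).elim
    have hN : col (k + 3 * c + 5) = false := by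
      cases hN : col (k + 3 * c + 5) with
      | false => rfl
      | true => exact (red 1 (2 * c + k + 4) (k + 3 * c + 5) (by omega) (by omega) (by omega)
          (by omega) h1 hP hN).elim
    have ha : col (2 * c + 2 - k) = true := by
      cases ha : col (2 * c + 2 - k) with
      | true => rfl
      | false => exact (blue (k + c + 3) (2 * c + 2 - k) (k + 3 * c + 5) (by omega) (by omega)
          (by omega) (by omega) hkc3 ha hN).elim
    have hb : col (3 * c + 3 - k) = false := by
      cases hb : col (3 * c + 3 - k) with
      | false => rfl
      | true => exact (red 1 (2 * c + 2 - k) (3 * c + 3 - k) (by omega) (by omega) (by omega)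
          (by omega) h1 ha hb).elim
    have hk2 : col (k + 2) = true := by
      cases hk2 : col (k + 2) with
      | true => rfl
      | false => exact (blue (3 * c + 3 - k) (k + 2) (k + 3 * c + 5) (by omega) (by omega)
          (by omega) (by omega) hb hk2 hN).elim
    have hQ : col (2 * k + c + 4) = false := by
      cases hQ : col (2 * k + c + 4) with
      | false => rfl
      | true => exact (red (k + 2) (k + 2) (2 * k + c + 4) (by omega) (by omega) (by omega)
          (by omega) hk2 hk2 hQ).elim
    have hm2 : col (m + 2) = true := by
      cases hm2 : col (m + 2) with
      | true => rfl
      | false => exact (blue (m + 2) (m + 2) (2 * k + c + 4) (by omega) (by omega) (by omega)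
          (by omega) hm2 hm2 hQ).elim
    exact red (m + 2) (m + 2) (2 * c + k + 4) (by omega) (by omega) (by omega)
      (by omega) hm2 hm2 hP
end

section
/- Let c and k be positive integers with 1 ≤ c ≤ k and k > 2c. Consider the red–blue coloring of {1, 2, …, 2k+c+3} in which the red elements are exactly those in {k+2, …, 2k+c+3} and the blue elements are exactly those in {1, …, k+1}. Then there is no triple (x, y, z) of red integers in {1, …, 2k+c+3} with x+y+c=z and no triple (x, y, z) of blue integers in {1, …, 2k+c+3} with x+y+k=z. -/
/-- For `1 ≤ c ≤ k` with `k > 2c`, the coloring of `{1,…,2k+c+3}` with red set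
`{k+2,…,2k+c+3}` and blue set `{1,…,k+1}` admits no red triple solving `x+y+c=z`
and no blue triple solving `x+y+k=z`. -/
theorem stmt_5 (c k : ℕ) (hc : 1 ≤ c) (hck : c ≤ k) (hk2c : 2 * c < k) :
    (¬ ∃ x y z : ℕ, 1 ≤ x ∧ x ≤ 2 * k + c + 3 ∧ 1 ≤ y ∧ y ≤ 2 * k + c + 3 ∧
      1 ≤ z ∧ z ≤ 2 * k + c + 3 ∧
      k + 2 ≤ x ∧ k + 2 ≤ y ∧ k + 2 ≤ z ∧
      x + y + c = z) ∧
    (¬ ∃ x y z : ℕ, 1 ≤ x ∧ x ≤ 2 * k + c + 3 ∧ 1 ≤ y ∧ y ≤ 2 * k + c + 3 ∧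
      1 ≤ z ∧ z ≤ 2 * k + c + 3 ∧
      x ≤ k + 1 ∧ y ≤ k + 1 ∧ z ≤ k + 1 ∧
      x + y + k = z) := by
  constructor
  · rintro ⟨x, y, z, _, _, _, _, _, hz, hx, hy, _, he⟩
    omega
  · rintro ⟨x, y, z, hx1, _, hy1, _, _, _, _, _, hz, he⟩
    omega
end

section
/- Let c and k be positive integers with 1 ≤ c ≤ k, c ≡ k (mod 2), and k > 2c. Then every red–blue coloring of {1, 2, …, 2k+c+4} contains either a triple (x, y, z) of red integers with x+y+c=z or a triple (x, y, z) of blue integers with x+y+k=z. -/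
/-- For `1 ≤ c ≤ k`, `c ≡ k (mod 2)`, `k > 2c`: every red–blue coloring of
`{1,…,2k+c+4}` contains a red triple solving `x+y+c=z` or a blue triple solving
`x+y+k=z`. -/
theorem stmt_6 (c k : ℕ) (hc : 1 ≤ c) (hck : c ≤ k) (hpar : c ≡ k [MOD 2])
    (hk2c : 2 * c < k) :
    ∀ col : ℕ → Bool,
      (∃ x y z : ℕ, 1 ≤ x ∧ x ≤ 2 * k + c + 4 ∧ 1 ≤ y ∧ y ≤ 2 * k + c + 4 ∧
        1 ≤ z ∧ z ≤ 2 * k + c + 4 ∧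
        col x = true ∧ col y = true ∧ col z = true ∧ x + y + c = z) ∨
      (∃ x y z : ℕ, 1 ≤ x ∧ x ≤ 2 * k + c + 4 ∧ 1 ≤ y ∧ y ≤ 2 * k + c + 4 ∧
        1 ≤ z ∧ z ≤ 2 * k + c + 4 ∧
        col x = false ∧ col y = false ∧ col z = false ∧ x + y + k = z) := by
  intro col
  by_contra hcon
  push_neg at hcon
  obtain ⟨hR, hB⟩ := hcon
  have hp : c % 2 = k % 2 := hpar
  obtain ⟨w, hw⟩ : ∃ w, w + w = k + c + 4 := ⟨(k + c + 4) / 2, by omega⟩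
  -- if x, y are red (true), then x+y+c is blue (false)
  have red : ∀ x y z : ℕ, 1 ≤ x → 1 ≤ y → z ≤ 2 * k + c + 4 → x + y + c = z →
      col x = true → col y = true → col z = false := by
    intro x y z hx hy hz heq cx cy
    by_contra h
    rw [Bool.not_eq_false] at h
    exact hR x y z hx (by omega) hy (by omega) (by omega) hz cx cy h heq
  -- if x, y are blue (false), then x+y+k is red (true)
  have blue : ∀ x y z : ℕ, 1 ≤ x → 1 ≤ y → z ≤ 2 * k + c + 4 → x + y + k = z →
      col x = false → col y = false → col z = true := by
    intro x y z hx hy hz heq cx cy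
    by_contra h
    rw [Bool.not_eq_true] at h
    exact hB x y z hx (by omega) hy (by omega) (by omega) hz cx cy h heq
  cases h1 : col 1 with
  | true =>
    have e1 : col (c + 2) = false :=
      red 1 1 (c + 2) (by omega) (by omega) (by omega) (by omega) h1 h1
    have e2 : col (k + 2 * c + 4) = true :=
      blue (c + 2) (c + 2) (k + 2 * c + 4) (by omega) (by omega) (by omega) (by omega) e1 e1
    have e3 : col (k + 3 * c + 5) = false :=
      red 1 (k + 2 * c + 4) (k + 3 * c + 5) (by omega) (by omega) (by omega) (by omega) h1 e2
    have e4 : col (2 * c + 3) = true := by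
      by_contra h
      rw [Bool.not_eq_true] at h
      have hx := blue (c + 2) (2 * c + 3) (k + 3 * c + 5) (by omega) (by omega) (by omega)
        (by omega) e1 h
      simp [e3] at hx
    have e5 : col (k - c + 1) = false := by
      by_contra h
      rw [Bool.not_eq_false] at h
      have hx := red (2 * c + 3) (k - c + 1) (k + 2 * c + 4) (by omega) (by omega) (by omega)
        (by omega) e4 h
      simp [e2] at hx
    have e6 : col (2 * k + 3) = true :=
      blue (c + 2) (k - c + 1) (2 * k + 3) (by omega) (by omega) (by omega) (by omega) e1 e5
    have e7 : col (2 * k + c + 4) = false :=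
      red 1 (2 * k + 3) (2 * k + c + 4) (by omega) (by omega) (by omega) (by omega) h1 e6
    have e8 : col w = false := by
      by_contra h
      rw [Bool.not_eq_false] at h
      have hx := red w w (k + 2 * c + 4) (by omega) (by omega) (by omega) (by omega) h h
      simp [e2] at hx
    have hx := blue w w (2 * k + c + 4) (by omega) (by omega) (by omega) (by omega) e8 e8
    simp [e7] at hx
  | false =>
    have f1 : col (k + 2) = true :=
      blue 1 1 (k + 2) (by omega) (by omega) (by omega) (by omega) h1 h1
    have f2 : col (2 * k + c + 4) = false :=
      red (k + 2) (k + 2) (2 * k + c + 4) (by omega) (by omega) (by omega) (by omega) f1 f1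
    have f3 : col w = true := by
      by_contra h
      rw [Bool.not_eq_true] at h
      have hx := blue w w (2 * k + c + 4) (by omega) (by omega) (by omega) (by omega) h h
      simp [f2] at hx
    have f4 : col (k + 2 * c + 4) = false :=
      red w w (k + 2 * c + 4) (by omega) (by omega) (by omega) (by omega) f3 f3
    have f5 : col (c + 2) = true := by
      by_contra h
      rw [Bool.not_eq_true] at h
      have hx := blue (c + 2) (c + 2) (k + 2 * c + 4) (by omega) (by omega) (by omega)
        (by omega) h h
      simp [f4] at hx
    have f6 : col (2 * c + 3) = true := by
      by_contra h
      rw [Bool.not_eq_true] at h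
      have hx := blue 1 (2 * c + 3) (k + 2 * c + 4) (by omega) (by omega) (by omega)
        (by omega) h1 h
      simp [f4] at hx
    have f7 : col (3 * c + 4) = false :=
      red (c + 2) (c + 2) (3 * c + 4) (by omega) (by omega) (by omega) (by omega) f5 f5
    have f8 : col (k + 3 * c + 5) = false :=
      red (k + 2) (2 * c + 3) (k + 3 * c + 5) (by omega) (by omega) (by omega) (by omega) f1 f6
    have hx := blue 1 (3 * c + 4) (k + 3 * c + 5) (by omega) (by omega) (by omega) (by omega)
      h1 f7
    simp [f8] at hx
end

section
/- Let α, c, k be real numbers with α > 0 and 1 ≤ c ≤ k ≤ 2c. Then every red–blue coloring of the closed real interval [α, k+3c+5α] contains either a triple (x, y, z) of red reals with x+y+c=z or a triple (x, y, z) of blue reals with x+y+k=z. -/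
/-- For real `α > 0` and `1 ≤ c ≤ k ≤ 2c`: every red–blue coloring of the closed real
interval `[α, k+3c+5α]` contains a red triple solving `x+y+c=z` or a blue triple
solving `x+y+k=z`. -/
theorem stmt_7 (α c k : ℝ) (hα : 0 < α) (hc : 1 ≤ c) (hck : c ≤ k)
    (hk2c : k ≤ 2 * c) :
    ∀ col : ℝ → Bool,
      (∃ x y z : ℝ, x ∈ Set.Icc α (k + 3 * c + 5 * α) ∧
        y ∈ Set.Icc α (k + 3 * c + 5 * α) ∧ z ∈ Set.Icc α (k + 3 * c + 5 * α) ∧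
        col x = true ∧ col y = true ∧ col z = true ∧ x + y + c = z) ∨
      (∃ x y z : ℝ, x ∈ Set.Icc α (k + 3 * c + 5 * α) ∧
        y ∈ Set.Icc α (k + 3 * c + 5 * α) ∧ z ∈ Set.Icc α (k + 3 * c + 5 * α) ∧
        col x = false ∧ col y = false ∧ col z = false ∧ x + y + k = z) := by
  intro col
  cases hA : col α with
  | true =>
    cases h1 : col (2*α+c) with
    | true => exact Or.inl ⟨α, α, 2*α+c, Set.mem_Icc.mpr ⟨by linarith, by linarith⟩, Set.mem_Icc.mpr ⟨by linarith, by linarith⟩, Set.mem_Icc.mpr ⟨by linarith, by linarith⟩, hA, hA, h1, by ring⟩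
    | false =>
      cases h2 : col (4*α+2*c+k) with
      | false => exact Or.inr ⟨2*α+c, 2*α+c, 4*α+2*c+k, Set.mem_Icc.mpr ⟨by linarith, by linarith⟩, Set.mem_Icc.mpr ⟨by linarith, by linarith⟩, Set.mem_Icc.mpr ⟨by linarith, by linarith⟩, h1, h1, h2, by ring⟩
      | true =>
        cases hT : col (k+3*c+5*α) with
        | true => exact Or.inl ⟨α, 4*α+2*c+k, k+3*c+5*α, Set.mem_Icc.mpr ⟨by linarith, by linarith⟩, Set.mem_Icc.mpr ⟨by linarith, by linarith⟩, Set.mem_Icc.mpr ⟨by linarith, by linarith⟩, hA, h2, hT, by ring⟩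
        | false =>
          cases h3 : col ((5*α+3*c)/2) with
          | false => exact Or.inr ⟨(5*α+3*c)/2, (5*α+3*c)/2, k+3*c+5*α, Set.mem_Icc.mpr ⟨by linarith, by linarith⟩, Set.mem_Icc.mpr ⟨by linarith, by linarith⟩, Set.mem_Icc.mpr ⟨by linarith, by linarith⟩, h3, h3, hT, by ring⟩
          | true =>
            cases h4 : col (5*α+4*c) with
            | true => exact Or.inl ⟨(5*α+3*c)/2, (5*α+3*c)/2, 5*α+4*c, Set.mem_Icc.mpr ⟨by linarith, by linarith⟩, Set.mem_Icc.mpr ⟨by linarith, by linarith⟩, Set.mem_Icc.mpr ⟨by linarith, by linarith⟩, h3, h3, h4, by ring⟩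
            | false =>
              cases h5 : col (3*α+2*c) with
              | false => exact Or.inr ⟨3*α+2*c, 2*α+c, k+3*c+5*α, Set.mem_Icc.mpr ⟨by linarith, by linarith⟩, Set.mem_Icc.mpr ⟨by linarith, by linarith⟩, Set.mem_Icc.mpr ⟨by linarith, by linarith⟩, h5, h1, hT, by ring⟩
              | true =>
                cases h6 : col (4*α+3*c) with
                | true => exact Or.inl ⟨3*α+2*c, α, 4*α+3*c, Set.mem_Icc.mpr ⟨by linarith, by linarith⟩, Set.mem_Icc.mpr ⟨by linarith, by linarith⟩, Set.mem_Icc.mpr ⟨by linarith, by linarith⟩, h5, hA, h6, by ring⟩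
                | false =>
                  cases h7 : col (2*α+2*c-k) with
                  | false => exact Or.inr ⟨2*α+2*c-k, 2*α+c, 4*α+3*c, Set.mem_Icc.mpr ⟨by linarith, by linarith⟩, Set.mem_Icc.mpr ⟨by linarith, by linarith⟩, Set.mem_Icc.mpr ⟨by linarith, by linarith⟩, h7, h1, h6, by ring⟩
                  | true =>
                    cases h8 : col (3*α+3*c-k) with
                    | true => exact Or.inl ⟨2*α+2*c-k, α, 3*α+3*c-k, Set.mem_Icc.mpr ⟨by linarith, by linarith⟩, Set.mem_Icc.mpr ⟨by linarith, by linarith⟩, Set.mem_Icc.mpr ⟨by linarith, by linarith⟩, h7, hA, h8, by ring⟩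
                    | false =>
                      exact Or.inr ⟨2*α+c, 3*α+3*c-k, 5*α+4*c, Set.mem_Icc.mpr ⟨by linarith, by linarith⟩, Set.mem_Icc.mpr ⟨by linarith, by linarith⟩, Set.mem_Icc.mpr ⟨by linarith, by linarith⟩, h1, h8, h4, by ring⟩
  | false =>
    cases h1 : col (2*α+k) with
    | false => exact Or.inr ⟨α, α, 2*α+k, Set.mem_Icc.mpr ⟨by linarith, by linarith⟩, Set.mem_Icc.mpr ⟨by linarith, by linarith⟩, Set.mem_Icc.mpr ⟨by linarith, by linarith⟩, hA, hA, h1, by ring⟩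
    | true =>
      cases h2 : col (4*α+c+2*k) with
      | true => exact Or.inl ⟨2*α+k, 2*α+k, 4*α+c+2*k, Set.mem_Icc.mpr ⟨by linarith, by linarith⟩, Set.mem_Icc.mpr ⟨by linarith, by linarith⟩, Set.mem_Icc.mpr ⟨by linarith, by linarith⟩, h1, h1, h2, by ring⟩
      | false =>
        cases h3 : col (2*α+(c+k)/2) with
        | false => exact Or.inr ⟨2*α+(c+k)/2, 2*α+(c+k)/2, 4*α+c+2*k, Set.mem_Icc.mpr ⟨by linarith, by linarith⟩, Set.mem_Icc.mpr ⟨by linarith, by linarith⟩, Set.mem_Icc.mpr ⟨by linarith, by linarith⟩, h3, h3, h2, by ring⟩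
        | true =>
          cases h4 : col (4*α+2*c+k) with
          | true => exact Or.inl ⟨2*α+(c+k)/2, 2*α+(c+k)/2, 4*α+2*c+k, Set.mem_Icc.mpr ⟨by linarith, by linarith⟩, Set.mem_Icc.mpr ⟨by linarith, by linarith⟩, Set.mem_Icc.mpr ⟨by linarith, by linarith⟩, h3, h3, h4, by ring⟩
          | false =>
            cases h5 : col (2*α+c) with
            | false => exact Or.inr ⟨2*α+c, 2*α+c, 4*α+2*c+k, Set.mem_Icc.mpr ⟨by linarith, by linarith⟩, Set.mem_Icc.mpr ⟨by linarith, by linarith⟩, Set.mem_Icc.mpr ⟨by linarith, by linarith⟩, h5, h5, h4, by ring⟩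
            | true =>
              cases h6 : col (4*α+3*c) with
              | true => exact Or.inl ⟨2*α+c, 2*α+c, 4*α+3*c, Set.mem_Icc.mpr ⟨by linarith, by linarith⟩, Set.mem_Icc.mpr ⟨by linarith, by linarith⟩, Set.mem_Icc.mpr ⟨by linarith, by linarith⟩, h5, h5, h6, by ring⟩
              | false =>
                cases hT : col (k+3*c+5*α) with
                | false => exact Or.inr ⟨α, 4*α+3*c, k+3*c+5*α, Set.mem_Icc.mpr ⟨by linarith, by linarith⟩, Set.mem_Icc.mpr ⟨by linarith, by linarith⟩, Set.mem_Icc.mpr ⟨by linarith, by linarith⟩, hA, h6, hT, by ring⟩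
                | true =>
                  cases h7 : col (3*α+2*c) with
                  | true => exact Or.inl ⟨2*α+k, 3*α+2*c, k+3*c+5*α, Set.mem_Icc.mpr ⟨by linarith, by linarith⟩, Set.mem_Icc.mpr ⟨by linarith, by linarith⟩, Set.mem_Icc.mpr ⟨by linarith, by linarith⟩, h1, h7, hT, by ring⟩
                  | false =>
                    exact Or.inr ⟨α, 3*α+2*c, 4*α+2*c+k, Set.mem_Icc.mpr ⟨by linarith, by linarith⟩, Set.mem_Icc.mpr ⟨by linarith, by linarith⟩, Set.mem_Icc.mpr ⟨by linarith, by linarith⟩, hA, h7, h4, by ring⟩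
end

section
/- Let α, c, k be real numbers with α > 0 and 1 ≤ c ≤ k ≤ 2c. Consider the red–blue coloring of the half-open real interval [α, k+3c+5α) in which the red points are exactly those in [α, c+2α) ∪ [k+2c+4α, k+3c+5α) and the blue points are exactly those in [c+2α, k+2c+4α). Then there is no triple (x, y, z) of red points with x+y+c=z and no triple (x, y, z) of blue points with x+y+k=z. Consequently, for every real N < k+3c+5α there is a red–blue coloring of [α, N] with no red solution to x+y+c=z and no blue solution to x+y+k=z. -/
lemma red_aux (α c k : ℝ) (hα : 0 < α) (hc : 1 ≤ c) (hck : c ≤ k)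
    (hk2c : k ≤ 2 * c) :
    ¬ ∃ x y z : ℝ,
      ((α ≤ x ∧ x < c + 2 * α) ∨ (k + 2 * c + 4 * α ≤ x ∧ x < k + 3 * c + 5 * α)) ∧
      ((α ≤ y ∧ y < c + 2 * α) ∨ (k + 2 * c + 4 * α ≤ y ∧ y < k + 3 * c + 5 * α)) ∧
      ((α ≤ z ∧ z < c + 2 * α) ∨ (k + 2 * c + 4 * α ≤ z ∧ z < k + 3 * c + 5 * α)) ∧
      x + y + c = z := by
  rintro ⟨x, y, z, hx, hy, hz, h⟩
  rcases hx with ⟨h1, h2⟩ | ⟨h1, h2⟩ <;> rcases hy with ⟨h3, h4⟩ | ⟨h3, h4⟩ <;>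
    rcases hz with ⟨h5, h6⟩ | ⟨h5, h6⟩ <;> linarith

lemma blue_aux (α c k : ℝ) (hα : 0 < α) (hc : 1 ≤ c) (hck : c ≤ k)
    (hk2c : k ≤ 2 * c) :
    ¬ ∃ x y z : ℝ,
      (c + 2 * α ≤ x ∧ x < k + 2 * c + 4 * α) ∧
      (c + 2 * α ≤ y ∧ y < k + 2 * c + 4 * α) ∧
      (c + 2 * α ≤ z ∧ z < k + 2 * c + 4 * α) ∧
      x + y + k = z := by
  rintro ⟨x, y, z, ⟨h1, h2⟩, ⟨h3, h4⟩, ⟨h5, h6⟩, h⟩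
  linarith



/-- For real `α > 0` and `1 ≤ c ≤ k ≤ 2c`: the coloring of `[α, k+3c+5α)` with red set
`[α, c+2α) ∪ [k+2c+4α, k+3c+5α)` and blue set `[c+2α, k+2c+4α)` admits no red triple
solving `x+y+c=z` and no blue triple solving `x+y+k=z`; consequently for every
`N < k+3c+5α` there is a red–blue coloring of `[α, N]` with neither kind of solution. -/
theorem stmt_8 (α c k : ℝ) (hα : 0 < α) (hc : 1 ≤ c) (hck : c ≤ k)
    (hk2c : k ≤ 2 * c) :
    (¬ ∃ x y z : ℝ,
      ((α ≤ x ∧ x < c + 2 * α) ∨ (k + 2 * c + 4 * α ≤ x ∧ x < k + 3 * c + 5 * α)) ∧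
      ((α ≤ y ∧ y < c + 2 * α) ∨ (k + 2 * c + 4 * α ≤ y ∧ y < k + 3 * c + 5 * α)) ∧
      ((α ≤ z ∧ z < c + 2 * α) ∨ (k + 2 * c + 4 * α ≤ z ∧ z < k + 3 * c + 5 * α)) ∧
      x + y + c = z) ∧
    (¬ ∃ x y z : ℝ,
      (c + 2 * α ≤ x ∧ x < k + 2 * c + 4 * α) ∧
      (c + 2 * α ≤ y ∧ y < k + 2 * c + 4 * α) ∧
      (c + 2 * α ≤ z ∧ z < k + 2 * c + 4 * α) ∧
      x + y + k = z) ∧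
    (∀ N : ℝ, N < k + 3 * c + 5 * α → ∃ col : ℝ → Bool,
      (¬ ∃ x y z : ℝ, x ∈ Set.Icc α N ∧ y ∈ Set.Icc α N ∧ z ∈ Set.Icc α N ∧
        col x = true ∧ col y = true ∧ col z = true ∧ x + y + c = z) ∧
      (¬ ∃ x y z : ℝ, x ∈ Set.Icc α N ∧ y ∈ Set.Icc α N ∧ z ∈ Set.Icc α N ∧
        col x = false ∧ col y = false ∧ col z = false ∧ x + y + k = z)) := by
  refine ⟨red_aux α c k hα hc hck hk2c, blue_aux α c k hα hc hck hk2c, ?_⟩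
  intro N hN
  refine ⟨fun x => decide (x < c + 2 * α ∨ k + 2 * c + 4 * α ≤ x), ?_, ?_⟩
  · rintro ⟨x, y, z, ⟨hx1, hx2⟩, ⟨hy1, hy2⟩, ⟨hz1, hz2⟩, cx, cy, cz, h⟩
    simp only [decide_eq_true_eq] at cx cy cz
    exact red_aux α c k hα hc hck hk2c ⟨x, y, z,
      cx.imp (fun h' => ⟨hx1, h'⟩) (fun h' => ⟨h', lt_of_le_of_lt hx2 hN⟩),
      cy.imp (fun h' => ⟨hy1, h'⟩) (fun h' => ⟨h', lt_of_le_of_lt hy2 hN⟩),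
      cz.imp (fun h' => ⟨hz1, h'⟩) (fun h' => ⟨h', lt_of_le_of_lt hz2 hN⟩), h⟩
  · rintro ⟨x, y, z, ⟨hx1, hx2⟩, ⟨hy1, hy2⟩, ⟨hz1, hz2⟩, cx, cy, cz, h⟩
    simp only [decide_eq_false_iff_not, not_or, not_lt] at cx cy cz
    exact blue_aux α c k hα hc hck hk2c ⟨x, y, z,
      ⟨cx.1, lt_of_not_ge cx.2⟩, ⟨cy.1, lt_of_not_ge cy.2⟩, ⟨cz.1, lt_of_not_ge cz.2⟩, h⟩
end

section
/- Let α, c, k be real numbers with α > 0, 1 ≤ c ≤ k, and k > 2c. Consider the red–blue coloring of the half-open real interval [α, 2k+c+4α) in which the blue points are exactly those in [α, k+2α) and the red points are exactly those in [k+2α, 2k+c+4α). Then there is no triple (x, y, z) of red points with x+y+c=z and no triple (x, y, z) of blue points with x+y+k=z. Consequently, for every real N < 2k+c+4α there is a red–blue coloring of [α, N] with no red solution to x+y+c=z and no blue solution to x+y+k=z. -/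
/-- For real `α > 0`, `1 ≤ c ≤ k`, `k > 2c`: the coloring of `[α, 2k+c+4α)` with blue
set `[α, k+2α)` and red set `[k+2α, 2k+c+4α)` admits no red triple solving `x+y+c=z`
and no blue triple solving `x+y+k=z`; consequently for every `N < 2k+c+4α` there is a
red–blue coloring of `[α, N]` with neither kind of solution. -/
theorem stmt_10 (α c k : ℝ) (hα : 0 < α) (hc : 1 ≤ c) (hck : c ≤ k)
    (hk2c : 2 * c < k) :
    (¬ ∃ x y z : ℝ,
      (k + 2 * α ≤ x ∧ x < 2 * k + c + 4 * α) ∧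
      (k + 2 * α ≤ y ∧ y < 2 * k + c + 4 * α) ∧
      (k + 2 * α ≤ z ∧ z < 2 * k + c + 4 * α) ∧
      x + y + c = z) ∧
    (¬ ∃ x y z : ℝ,
      (α ≤ x ∧ x < k + 2 * α) ∧
      (α ≤ y ∧ y < k + 2 * α) ∧
      (α ≤ z ∧ z < k + 2 * α) ∧
      x + y + k = z) ∧
    (∀ N : ℝ, N < 2 * k + c + 4 * α → ∃ col : ℝ → Bool,
      (¬ ∃ x y z : ℝ, x ∈ Set.Icc α N ∧ y ∈ Set.Icc α N ∧ z ∈ Set.Icc α N ∧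
        col x = true ∧ col y = true ∧ col z = true ∧ x + y + c = z) ∧
      (¬ ∃ x y z : ℝ, x ∈ Set.Icc α N ∧ y ∈ Set.Icc α N ∧ z ∈ Set.Icc α N ∧
        col x = false ∧ col y = false ∧ col z = false ∧ x + y + k = z)) := by
  refine ⟨?_, ?_, ?_⟩
  · rintro ⟨x, y, z, ⟨hx1, hx2⟩, ⟨hy1, hy2⟩, ⟨hz1, hz2⟩, heq⟩
    linarith
  · rintro ⟨x, y, z, ⟨hx1, hx2⟩, ⟨hy1, hy2⟩, ⟨hz1, hz2⟩, heq⟩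
    linarith
  · intro N hN
    refine ⟨fun x => decide (k + 2 * α ≤ x), ?_, ?_⟩
    · rintro ⟨x, y, z, ⟨hx1, hx2⟩, ⟨hy1, hy2⟩, ⟨hz1, hz2⟩, cx, cy, cz, heq⟩
      simp only [decide_eq_true_eq] at cx cy cz
      linarith
    · rintro ⟨x, y, z, ⟨hx1, hx2⟩, ⟨hy1, hy2⟩, ⟨hz1, hz2⟩, cx, cy, cz, heq⟩
      simp only [decide_eq_false_iff_not, not_le] at cx cy cz
      linarith
end

section
/- Let α, c, k be real numbers with α > 0 and 1 ≤ c ≤ k ≤ 2c. Then the two-color off-diagonal continuous Rado number on [α, ∞) of the pair x+y+c=z (red) and x+y+k=z (blue) equals k+3c+5α; that is, k+3c+5α is the least real number N ≥ α such that every red–blue coloring of the interval [α, N] contains either a red solution of x+y+c=z or a blue solution of x+y+k=z. -/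
set_option maxHeartbeats 1000000
set_option synthInstance.maxHeartbeats 1000000
set_option synthInstance.maxSize 2000


/-- For real `α > 0` and `1 ≤ c ≤ k ≤ 2c`: `k+3c+5α` is the least real `N ≥ α` such
that every red–blue coloring of `[α, N]` contains a red triple solving `x+y+c=z` or a
blue triple solving `x+y+k=z`. -/
theorem stmt_11 (α c k : ℝ) (hα : 0 < α) (hc : 1 ≤ c) (hck : c ≤ k)
    (hk2c : k ≤ 2 * c) :
    IsLeast {N : ℝ | α ≤ N ∧ ∀ col : ℝ → Bool,
      (∃ x y z : ℝ, x ∈ Set.Icc α N ∧ y ∈ Set.Icc α N ∧ z ∈ Set.Icc α N ∧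
        col x = true ∧ col y = true ∧ col z = true ∧ x + y + c = z) ∨
      (∃ x y z : ℝ, x ∈ Set.Icc α N ∧ y ∈ Set.Icc α N ∧ z ∈ Set.Icc α N ∧
        col x = false ∧ col y = false ∧ col z = false ∧ x + y + k = z)}
      (k + 3 * c + 5 * α) := by
  constructor
  · refine ⟨by linarith, ?_⟩
    intro col
    by_contra hcon
    push_neg at hcon
    obtain ⟨hr, hb⟩ := hcon
    set N : ℝ := k + 3 * c + 5 * α with hN
    -- the eleven points
    have m1 : α ∈ Set.Icc α N := ⟨le_refl _, by simp only [hN]; linarith⟩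
    have m2 : 2*α+k ∈ Set.Icc α N := ⟨by linarith, by simp only [hN]; linarith⟩
    have m3 : 2*α+(c+k)/2 ∈ Set.Icc α N := ⟨by linarith, by simp only [hN]; linarith⟩
    have m4 : 2*α+c ∈ Set.Icc α N := ⟨by linarith, by simp only [hN]; linarith⟩
    have m5 : 2*α+2*c-k ∈ Set.Icc α N := ⟨by linarith, by simp only [hN]; linarith⟩
    have m6 : 3*α+2*c ∈ Set.Icc α N := ⟨by linarith, by simp only [hN]; linarith⟩
    have m7 : 3*α+3*c-k ∈ Set.Icc α N := ⟨by linarith, by simp only [hN]; linarith⟩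
    have m8 : 4*α+c+2*k ∈ Set.Icc α N := ⟨by linarith, by simp only [hN]; linarith⟩
    have m9 : 4*α+2*c+k ∈ Set.Icc α N := ⟨by linarith, by simp only [hN]; linarith⟩
    have m10 : 4*α+3*c ∈ Set.Icc α N := ⟨by linarith, by simp only [hN]; linarith⟩
    have m11 : N ∈ Set.Icc α N := ⟨by simp only [hN]; linarith, le_refl _⟩
    -- red clauses (no monochromatic red solution of x+y+c=z)
    have R1 : ¬(col (2*α+k) = true ∧ col (4*α+c+2*k) = true) :=
      fun ⟨a, b⟩ => hr (2*α+k) (2*α+k) (4*α+c+2*k) m2 m2 m8 a a b (by ring)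
    have R2 : ¬(col α = true ∧ col (2*α+c) = true) :=
      fun ⟨a, b⟩ => hr α α (2*α+c) m1 m1 m4 a a b (by ring)
    have R3 : ¬(col α = true ∧ col (4*α+2*c+k) = true ∧ col N = true) :=
      fun ⟨a, b, d⟩ => hr α (4*α+2*c+k) N m1 m9 m11 a b d (by simp only [hN]; ring)
    have R4 : ¬(col α = true ∧ col (2*α+2*c-k) = true ∧ col (3*α+3*c-k) = true) :=
      fun ⟨a, b, d⟩ => hr α (2*α+2*c-k) (3*α+3*c-k) m1 m5 m7 a b d (by ring)
    have R5 : ¬(col (2*α+c) = true ∧ col (4*α+3*c) = true) :=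
      fun ⟨a, b⟩ => hr (2*α+c) (2*α+c) (4*α+3*c) m4 m4 m10 a a b (by ring)
    have R6 : ¬(col (2*α+(c+k)/2) = true ∧ col (4*α+2*c+k) = true) :=
      fun ⟨a, b⟩ => hr (2*α+(c+k)/2) (2*α+(c+k)/2) (4*α+2*c+k) m3 m3 m9 a a b (by ring)
    have R7 : ¬(col (2*α+k) = true ∧ col (3*α+2*c) = true ∧ col N = true) :=
      fun ⟨a, b, d⟩ => hr (2*α+k) (3*α+2*c) N m2 m6 m11 a b d (by simp only [hN]; ring)
    have R8 : ¬(col α = true ∧ col (3*α+2*c) = true ∧ col (4*α+3*c) = true) :=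
      fun ⟨a, b, d⟩ => hr α (3*α+2*c) (4*α+3*c) m1 m6 m10 a b d (by ring)
    -- blue clauses (no monochromatic blue solution of x+y+k=z)
    have B1 : ¬(col α = false ∧ col (3*α+2*c) = false ∧ col (4*α+2*c+k) = false) :=
      fun ⟨a, b, d⟩ => hb α (3*α+2*c) (4*α+2*c+k) m1 m6 m9 a b d (by ring)
    have B2 : ¬(col (2*α+c) = false ∧ col (4*α+2*c+k) = false) :=
      fun ⟨a, b⟩ => hb (2*α+c) (2*α+c) (4*α+2*c+k) m4 m4 m9 a a b (by ring)
    have B3 : ¬(col α = false ∧ col (4*α+3*c) = false ∧ col N = false) :=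
      fun ⟨a, b, d⟩ => hb α (4*α+3*c) N m1 m10 m11 a b d (by simp only [hN]; ring)
    have B4 : ¬(col α = false ∧ col (2*α+k) = false) :=
      fun ⟨a, b⟩ => hb α α (2*α+k) m1 m1 m2 a a b (by ring)
    have B5 : ¬(col (2*α+(c+k)/2) = false ∧ col (4*α+c+2*k) = false) :=
      fun ⟨a, b⟩ => hb (2*α+(c+k)/2) (2*α+(c+k)/2) (4*α+c+2*k) m3 m3 m8 a a b (by ring)
    have B6 : ¬(col (2*α+k) = false ∧ col (3*α+3*c-k) = false ∧ col N = false) :=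
      fun ⟨a, b, d⟩ => hb (2*α+k) (3*α+3*c-k) N m2 m7 m11 a b d (by simp only [hN]; ring)
    have B7 : ¬(col (2*α+c) = false ∧ col (2*α+2*c-k) = false ∧ col (4*α+3*c) = false) :=
      fun ⟨a, b, d⟩ => hb (2*α+c) (2*α+2*c-k) (4*α+3*c) m4 m5 m10 a b d (by ring)
    have B8 : ¬(col (2*α+c) = false ∧ col (3*α+2*c) = false ∧ col N = false) :=
      fun ⟨a, b, d⟩ => hb (2*α+c) (3*α+2*c) N m4 m6 m11 a b d (by simp only [hN]; ring)
    clear hr hb m1 m2 m3 m4 m5 m6 m7 m8 m9 m10 m11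
    revert R1 R2 R3 R4 R5 R6 R7 R8 B1 B2 B3 B4 B5 B6 B7 B8
    generalize col α = b1
    generalize col (2*α+k) = b2
    generalize col (2*α+(c+k)/2) = b3
    generalize col (2*α+c) = b4
    generalize col (2*α+2*c-k) = b5
    generalize col (3*α+2*c) = b6
    generalize col (3*α+3*c-k) = b7
    generalize col (4*α+c+2*k) = b8
    generalize col (4*α+2*c+k) = b9
    generalize col (4*α+3*c) = b10
    generalize col N = b11
    revert b1 b2 b3 b4 b5 b6 b7 b8 b9 b10 b11
    decide
  · rintro N ⟨hN, hcol⟩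
    by_contra hlt
    push_neg at hlt
    rcases hcol (fun x => decide (x < 2*α+c ∨ 4*α+2*c+k ≤ x)) with
      ⟨x, y, z, hx, hy, hz, cx, cy, cz, he⟩ | ⟨x, y, z, hx, hy, hz, cx, cy, cz, he⟩
    · rw [decide_eq_true_iff] at cx cy cz
      rcases cx with cx | cx
      · rcases cy with cy | cy
        · -- z lands in the blue zone
          rcases cz with cz | cz
          · have := hx.1; have := hy.1; linarith
          · linarith
        · have := hx.1; have := hz.2; linarith
      · have := hy.1; have := hz.2; linarith
    · rw [decide_eq_false_iff_not] at cx cy cz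
      push_neg at cx cy cz
      have := cz.2
      have := cx.1; have := cy.1
      linarith
end
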